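/- For a digit space (X,E) and a digital tree T over E, the value ⟦T⟧ := ⋂_{n∈ℕ} f_{T,n}[X], where f_{T,n}(x) = { e⃗(x) : e⃗ ∈ E^n ∩ T }, equals the set { ⟦α⟧ : α ∈ [T] } of values of infinite paths of T under the coding map. -/
import Mathlib

/-- `seqComp α n` is the composition `α 0 ∘ α 1 ∘ ⋯ ∘ α (n-1)`. -/
def seqComp {X : Type*} (α : ℕ → X → X) : ℕ → X → X
  | 0 => id
  | n + 1 => seqComp α n ∘ α n

/-- The composition `e 0 ∘ ⋯ ∘ e (n-1)` of a finite list of digits. -/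
def listComp {X : Type*} (l : List (X → X)) : X → X := l.foldr (· ∘ ·) id

/-- A digital tree: a nonempty set of finite digit sequences, downward closed under the
prefix order, with no maximal elements. -/
def DigitalTree {E : Type*} (T : Set (List E)) : Prop :=
  T.Nonempty ∧ (∀ l m : List E, l <+: m → m ∈ T → l ∈ T) ∧
    ∀ l ∈ T, ∃ e : E, l ++ [e] ∈ T

lemma listComp_append {X : Type*} (l m : List (X → X)) :
    listComp (l ++ m) = listComp l ∘ listComp m := by
  induction l with
  | nil => rfl
  | cons a l ih => simp [listComp, List.foldr_cons] at *; rw [ih]; rfl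

lemma listComp_ofFn {X : Type*} (α : ℕ → X → X) (n : ℕ) :
    listComp (List.ofFn fun i : Fin n => α i) = seqComp α n := by
  induction n with
  | zero => rfl
  | succ n ih =>
      rw [List.ofFn_succ', List.concat_eq_append, listComp_append]
      have : (List.ofFn fun i : Fin n => α i.castSucc) = List.ofFn fun i : Fin n => α i := by
        simp
      rw [this, ih]
      rfl

lemma listComp_lipschitz {X : Type*} [MetricSpace X] (K : NNReal) (l : List (X → X))
    (h : ∀ e ∈ l, LipschitzWith K e) : LipschitzWith (K ^ l.length) (listComp l) := by
  induction l with
  | nil => simpa [listComp] using LipschitzWith.id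
  | cons a l ih =>
      have : listComp (a :: l) = a ∘ listComp l := rfl
      rw [this, List.length_cons, pow_succ']
      exact (h a (by simp)).comp (ih fun e he => h e (by simp [he]))

lemma range_listComp_mono {X : Type*} {l m : List (X → X)} (h : l <+: m) :
    Set.range (listComp m) ⊆ Set.range (listComp l) := by
  obtain ⟨r, rfl⟩ := h
  rw [listComp_append]
  exact Set.range_comp_subset_range _ _

/-- `l` has extensions in `S` of every length. -/
def ExtAux {A : Type*} (S : Set (List A)) (l : List A) : Prop :=
  ∀ n : ℕ, ∃ m ∈ S, l <+: m ∧ m.length = l.length + n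

lemma koenig {A : Type*} (E : Finset A) (S : Set (List A))
    (hpre : ∀ l m : List A, l <+: m → m ∈ S → l ∈ S)
    (hE : ∀ l ∈ S, ∀ e ∈ l, e ∈ E)
    (hlev : ∀ n : ℕ, ∃ l ∈ S, l.length = n) :
    ∃ β : ℕ → A, ∀ n : ℕ, (List.ofFn fun i : Fin n => β i) ∈ S := by
  classical
  have step : ∀ l : List A, l ∈ S → ExtAux S l →
      ∃ e : A, (l ++ [e]) ∈ S ∧ ExtAux S (l ++ [e]) := by
    intro l hlS hlE
    by_contra hc
    push_neg at hc
    have hbad : ∀ e : A, ∃ n : ℕ, ((l ++ [e]) ∈ S →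
        ¬ ∃ m ∈ S, (l ++ [e]) <+: m ∧ m.length = (l ++ [e]).length + n) := by
      intro e
      by_cases hS : (l ++ [e]) ∈ S
      · have h2 := hc e hS
        unfold ExtAux at h2
        push_neg at h2
        obtain ⟨n, hn⟩ := h2
        exact ⟨n, fun _ => by push_neg; exact hn⟩
      · exact ⟨0, fun h => absurd h hS⟩
    choose f hfspec using hbad
    obtain ⟨m, hmS, ⟨r, hr⟩, hml⟩ := hlE (E.sup f + 1)
    have hrne : r ≠ [] := by
      intro h; subst h; simp at hr; subst hr; omega
    set e := r.head hrne with he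
    have hm2 : (l ++ [e]) ++ r.tail = m := by
      rw [← hr, List.append_assoc]; simp [he]
    have hpref : (l ++ [e]) <+: m := ⟨r.tail, hm2⟩
    have heS : (l ++ [e]) ∈ S := hpre _ _ hpref hmS
    have heE : e ∈ E := hE m hmS e (by rw [← hm2]; simp)
    have hfle : f e ≤ E.sup f := Finset.le_sup heE
    apply hfspec e heS
    refine ⟨m.take (l.length + 1 + f e), hpre _ _ (List.take_prefix _ _) hmS, ?_, ?_⟩
    · apply List.prefix_of_prefix_length_le hpref (List.take_prefix _ _)
      simp only [List.length_take, List.length_append, List.length_singleton, hml]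
      omega
    · simp only [List.length_take, List.length_append, List.length_singleton, hml]
      omega
  have h0 : ([] : List A) ∈ S ∧ ExtAux S [] := by
    constructor
    · obtain ⟨l, hl, hlen⟩ := hlev 0
      rwa [List.length_eq_zero_iff.mp hlen] at hl
    · intro n
      obtain ⟨l, hl, hlen⟩ := hlev n
      exact ⟨l, hl, List.nil_prefix, by simpa using hlen⟩
  choose nextE hnS hnE using step
  let chain : ℕ → {l : List A // l ∈ S ∧ ExtAux S l} := fun n =>
    Nat.rec ⟨[], h0⟩
      (fun _ p => ⟨p.1 ++ [nextE p.1 p.2.1 p.2.2],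
        hnS p.1 p.2.1 p.2.2, hnE p.1 p.2.1 p.2.2⟩) n
  refine ⟨fun n => nextE (chain n).1 (chain n).2.1 (chain n).2.2, ?_⟩
  have key : ∀ n : ℕ,
      (List.ofFn fun i : Fin n => nextE (chain i).1 (chain i).2.1 (chain i).2.2)
        = (chain n).1 := by
    intro n
    induction n with
    | zero => rfl
    | succ n ih =>
        rw [List.ofFn_succ', List.concat_eq_append]
        exact congrArg₂ (· ++ ·) ih rfl
  intro n
  rw [key n]
  exact (chain n).2.1

/-- For a digit space `(X, E)` with coding map `val`, and a digital tree `T` over `E`,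
the value `⟦T⟧ = ⋂ n, f_{T,n}[X]` (where `f_{T,n}[X]` is the union of the images of `X`
under the compositions of the length-`n` sequences in `T`) equals the set of values
`⟦α⟧` of infinite paths `α` of `T` under the coding map. -/
theorem stmt18 {X : Type*} [MetricSpace X] [CompactSpace X] [Nonempty X]
    (E : Finset (X → X))
    (hcontr : ∀ e ∈ E, ∃ K : NNReal, ContractingWith K e)
    (hcover : ∀ x : X, ∃ e ∈ E, x ∈ Set.range e)
    (val : (ℕ → X → X) → X)
    (hval : ∀ α : ℕ → X → X, (∀ n, α n ∈ E) → ∀ n, val α ∈ Set.range (seqComp α n))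
    (T : Set (List (X → X))) (hT : DigitalTree T)
    (hTE : ∀ l ∈ T, ∀ e ∈ l, e ∈ E) :
    (⋂ n : ℕ, ⋃ l ∈ {l ∈ T | l.length = n}, Set.range (listComp l)) =
      {x : X | ∃ α : ℕ → X → X,
        (∀ n : ℕ, (List.ofFn fun i : Fin n => α i) ∈ T) ∧ val α = x} := by
  classical
  -- a uniform contraction constant
  have hKex : ∀ e : X → X, ∃ K : NNReal, e ∈ E → ContractingWith K e := by
    intro e
    by_cases he : e ∈ E
    · obtain ⟨K, hK⟩ := hcontr e he
      exact ⟨K, fun _ => hK⟩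
    · exact ⟨0, fun h => absurd h he⟩
  choose c hc using hKex
  set K : NNReal := E.sup c with hKdef
  have hK1 : K < 1 := by
    rw [hKdef]
    apply Finset.sup_lt_iff (by norm_num : (⊥ : NNReal) < 1) |>.mpr
    intro e he
    exact (hc e he).1
  have hlipK : ∀ e ∈ E, LipschitzWith K e := fun e he =>
    ((hc e he).2).weaken (Finset.le_sup he)
  set D : ℝ := Metric.diam (Set.univ : Set X) with hD
  have hdistD : ∀ a b : X, dist a b ≤ D :=
    fun a b => Metric.dist_le_diam_of_mem isCompact_univ.isBounded trivial trivial
  -- key: if x and y both lie in the range of every level composition along α, then x = y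
  have dist_le : ∀ (l : List (X → X)), (∀ e ∈ l, e ∈ E) →
      ∀ a b, a ∈ Set.range (listComp l) → b ∈ Set.range (listComp l) →
        dist a b ≤ (K : ℝ) ^ l.length * D := by
    intro l hl a b ⟨u, hu⟩ ⟨v, hv⟩
    have hlip := listComp_lipschitz K l fun e he => hlipK e (hl e he)
    calc dist a b = dist (listComp l u) (listComp l v) := by rw [hu, hv]
      _ ≤ (K ^ l.length : NNReal) * dist u v := hlip.dist_le_mul u v
      _ ≤ (K : ℝ) ^ l.length * D := by
          push_cast
          exact mul_le_mul_of_nonneg_left (hdistD u v) (by positivity)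
  have htend : Filter.Tendsto (fun n : ℕ => (K : ℝ) ^ n * D) Filter.atTop (nhds 0) := by
    have h1 : Filter.Tendsto (fun n : ℕ => (K : ℝ) ^ n) Filter.atTop (nhds 0) :=
      tendsto_pow_atTop_nhds_zero_of_lt_one (by positivity) (by exact_mod_cast hK1)
    simpa using h1.mul_const D
  ext x
  simp only [Set.mem_iInter, Set.mem_iUnion, Set.mem_setOf_eq, exists_prop]
  constructor
  · intro hx
    set S : Set (List (X → X)) := {l | l ∈ T ∧ x ∈ Set.range (listComp l)} with hS
    have hpre : ∀ l m : List (X → X), l <+: m → m ∈ S → l ∈ S := by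
      intro l m hlm ⟨hmT, hmx⟩
      exact ⟨hT.2.1 l m hlm hmT, range_listComp_mono hlm hmx⟩
    have hE' : ∀ l ∈ S, ∀ e ∈ l, e ∈ E := fun l hl => hTE l hl.1
    have hlev : ∀ n : ℕ, ∃ l ∈ S, l.length = n := by
      intro n
      obtain ⟨l, ⟨⟨hlT, hlen⟩, hxl⟩⟩ := hx n
      exact ⟨l, ⟨hlT, hxl⟩, hlen⟩
    obtain ⟨β, hβ⟩ := koenig E S hpre hE' hlev
    have hβT : ∀ n : ℕ, (List.ofFn fun i : Fin n => β i) ∈ T := fun n => (hβ n).1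
    have hβE : ∀ n : ℕ, β n ∈ E := by
      intro n
      apply hTE _ (hβT (n + 1))
      rw [List.mem_ofFn]
      exact ⟨Fin.last n, rfl⟩
    refine ⟨β, hβT, ?_⟩
    have hvb : ∀ n : ℕ, dist (val β) x ≤ (K : ℝ) ^ n * D := by
      intro n
      have h1 : val β ∈ Set.range (listComp (List.ofFn fun i : Fin n => β i)) := by
        rw [listComp_ofFn]
        exact hval β hβE n
      have h2 : x ∈ Set.range (listComp (List.ofFn fun i : Fin n => β i)) := (hβ n).2
      have := dist_le _ (fun e he => by
        rw [List.mem_ofFn] at he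
        obtain ⟨i, rfl⟩ := he
        exact hβE i) (val β) x h1 h2
      simpa using this
    have : dist (val β) x ≤ 0 := ge_of_tendsto' htend hvb
    have : dist (val β) x = 0 := le_antisymm this dist_nonneg
    exact dist_eq_zero.mp this
  · rintro ⟨α, hαT, rfl⟩ n
    have hαE : ∀ k : ℕ, α k ∈ E := by
      intro k
      apply hTE _ (hαT (k + 1))
      rw [List.mem_ofFn]
      exact ⟨Fin.last k, rfl⟩
    refine ⟨List.ofFn fun i : Fin n => α i, ⟨⟨hαT n, by simp⟩, ?_⟩⟩
    rw [listComp_ofFn]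
    exact hval α hαE n
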